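/- arXiv:math/9911162 — 3 statements merged into one kernel-verified Lean document; each statement's English description precedes it below -/
import Mathlib

section
/- Consider a multitype branching process with countable type space G whose offspring numbers are independent across types and generations, with mean offspring matrix m(γ,θ). If there exists q : G → [1,∞) with α_q := sup_γ (1/q(γ)) Σ_θ q(θ) m(γ,θ) < 1, then starting from a single individual of any type γ, the total progeny is finite almost surely. -/
open MeasureTheory
open scoped ENNReal

/-- Subcritical multitype branching process: if there is a size function `q ≥ 1` with
`α_q = sup_γ (1/q γ) Σ_θ q θ * m γ θ < 1`, then starting from a single individual of any
type `γ₀`, the total progeny is finite almost surely.  Here `Z n ω θ` is the number of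
individuals of type `θ` in generation `n`, and the mean offspring relation
`E[Z_{n+1}(θ)] = Σ_κ E[Z_n(κ)] m(κ,θ)` encodes the branching structure. -/
theorem multitype_branching_total_progeny_finite {Ω : Type*} [MeasurableSpace Ω]
    (ℙ : Measure Ω) [IsProbabilityMeasure ℙ]
    {G : Type*} [Countable G] [DecidableEq G] (m : G → G → ℝ≥0∞)
    (q : G → ℝ≥0∞) (hq1 : ∀ γ, 1 ≤ q γ) (hqfin : ∀ γ, q γ ≠ ⊤)
    (α : ℝ≥0∞) (hα : α = ⨆ γ, (∑' θ, q θ * m γ θ) / q γ) (hsub : α < 1)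
    (γ₀ : G) (Z : ℕ → Ω → G → ℕ)
    (hmeas : ∀ n θ, Measurable fun ω => Z n ω θ)
    (hinit : ∀ ω θ, Z 0 ω θ = if θ = γ₀ then 1 else 0)
    (hbranch : ∀ n θ, ∫⁻ ω, (Z (n + 1) ω θ : ℝ≥0∞) ∂ℙ
      = ∑' κ, (∫⁻ ω, (Z n ω κ : ℝ≥0∞) ∂ℙ) * m κ θ) :
    ∀ᵐ ω ∂ℙ, (∑' (n : ℕ) (θ : G), (Z n ω θ : ℝ≥0∞)) < ⊤ := by
  set E : ℕ → G → ℝ≥0∞ := fun n θ => ∫⁻ ω, (Z n ω θ : ℝ≥0∞) ∂ℙ with hE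
  set S : ℕ → ℝ≥0∞ := fun n => ∑' θ, q θ * E n θ with hS
  have hkey : ∀ κ, (∑' θ, q θ * m κ θ) ≤ α * q κ := by
    intro κ
    have h1 : (∑' θ, q θ * m κ θ) / q κ ≤ α := hα ▸ le_iSup (fun γ => (∑' θ, q θ * m γ θ) / q γ) κ
    have hq0 : q κ ≠ 0 := by intro h; simpa [h] using hq1 κ
    rwa [ENNReal.div_le_iff hq0 (hqfin κ)] at h1
  have hstep : ∀ n, S (n + 1) ≤ α * S n := by
    intro n
    calc S (n + 1) = ∑' θ, q θ * ∑' κ, E n κ * m κ θ := by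
          simp only [hS, hE]
          exact tsum_congr fun θ => by rw [hbranch n θ]
      _ = ∑' θ, ∑' κ, E n κ * (q θ * m κ θ) := by
          refine tsum_congr fun θ => ?_
          rw [← ENNReal.tsum_mul_left]
          exact tsum_congr fun κ => by ring
      _ = ∑' κ, ∑' θ, E n κ * (q θ * m κ θ) := ENNReal.tsum_comm
      _ = ∑' κ, E n κ * ∑' θ, q θ * m κ θ := tsum_congr fun κ => ENNReal.tsum_mul_left
      _ ≤ ∑' κ, E n κ * (α * q κ) :=
          ENNReal.tsum_le_tsum fun κ => mul_le_mul_right (hkey κ) _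
      _ = α * S n := by
          rw [hS, ← ENNReal.tsum_mul_left]
          exact tsum_congr fun κ => by ring
  have hS0 : S 0 = q γ₀ := by
    have hE0 : ∀ θ, E 0 θ = if θ = γ₀ then 1 else 0 := by
      intro θ
      simp only [hE]
      have : ∀ ω, ((Z 0 ω θ : ℝ≥0∞)) = (if θ = γ₀ then 1 else 0 : ℝ≥0∞) := by
        intro ω; rw [hinit ω θ]; split <;> simp
      simp only [this]
      split <;> simp
    simp only [hS, hE0]
    rw [tsum_eq_single γ₀ (by intro b hb; simp [hb])]
    simp
  have hSn : ∀ n, S n ≤ α ^ n * q γ₀ := by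
    intro n
    induction n with
    | zero => simp [hS0]
    | succ k ih =>
        calc S (k + 1) ≤ α * S k := hstep k
          _ ≤ α * (α ^ k * q γ₀) := mul_le_mul_right ih _
          _ = α ^ (k + 1) * q γ₀ := by ring
  have hEn : ∀ n, (∑' θ, E n θ) ≤ S n := by
    intro n
    exact ENNReal.tsum_le_tsum fun θ => by
      conv_lhs => rw [← one_mul (E n θ)]
      exact mul_le_mul_left (hq1 θ) _
  have hmc : ∀ n θ, Measurable fun ω => ((Z n ω θ : ℝ≥0∞)) := fun n θ =>
    measurable_from_nat.comp (hmeas n θ)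
  have hmeas2 : Measurable fun ω => ∑' (n : ℕ) (θ : G), (Z n ω θ : ℝ≥0∞) :=
    Measurable.ennreal_tsum fun n => Measurable.ennreal_tsum fun θ =>
      (hmc n θ)
  have hint : (∫⁻ ω, ∑' (n : ℕ) (θ : G), (Z n ω θ : ℝ≥0∞) ∂ℙ) ≠ ⊤ := by
    rw [lintegral_tsum fun n => (Measurable.ennreal_tsum fun θ =>
      (hmc n θ)).aemeasurable]
    have h1 : ∀ n, (∫⁻ ω, ∑' θ, (Z n ω θ : ℝ≥0∞) ∂ℙ) = ∑' θ, E n θ := fun n =>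
      lintegral_tsum fun θ => (hmc n θ).aemeasurable
    have hle : (∑' n, ∫⁻ ω, ∑' θ, (Z n ω θ : ℝ≥0∞) ∂ℙ) ≤ ∑' n : ℕ, α ^ n * q γ₀ := by
      refine ENNReal.tsum_le_tsum fun n => ?_
      rw [h1 n]; exact (hEn n).trans (hSn n)
    refine ne_of_lt (lt_of_le_of_lt hle ?_)
    rw [ENNReal.tsum_mul_right, ENNReal.tsum_geometric]
    exact ENNReal.mul_lt_top (ENNReal.inv_lt_top.mpr (tsub_pos_of_lt hsub)) (hqfin γ₀).lt_top
  exact ae_lt_top hmeas2 hint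
end

section
/- For the homogeneous one-dimensional continuous loss network with call-arrival rate κ and call-length distribution π with first moment ρ₁ and second moment ρ₂, choosing the size function q(L) = max(L,1) yields α_q ≤ κ(ρ₂ + ρ₁ + 1). Hence κ(ρ₂ + ρ₁ + 1) < 1 is a sufficient condition for α_q < 1. -/
open MeasureTheory

/- For a call of length `L` and an incompatible call of length `x > 0`, `(L + x) max(x, 1)` is at
most `max(L, 1) (x² + x + 1)`, since `L + x ≤ max(L, 1) (1 + x)` and `(1 + x) max(x, 1) ≤ x² + x + 1`.
Integrating against `π` and dividing by `max(L, 1)` gives the bound, uniformly in `L`. -/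

lemma add_mul_max_one_le_max_one_mul {L x : ℝ} (hx : 0 ≤ x) :
    (L + x) * max x 1 ≤ max L 1 * (x ^ 2 + x + 1) := by
  have hL : L + x ≤ max L 1 * (1 + x) := by
    nlinarith [le_max_left L 1, le_max_right L 1]
  have hx1 : (1 + x) * max x 1 ≤ x ^ 2 + x + 1 := by
    rcases le_total x 1 with h | h
    · rw [max_eq_right h]; nlinarith
    · rw [max_eq_left h]; nlinarith
  calc (L + x) * max x 1 ≤ max L 1 * (1 + x) * max x 1 := by gcongr
    _ = max L 1 * ((1 + x) * max x 1) := by ring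
    _ ≤ max L 1 * (x ^ 2 + x + 1) := by gcongr

lemma integral_sq_add_self_add_one {μ : Measure ℝ} [IsProbabilityMeasure μ]
    (h1 : Integrable (fun x => x) μ) (h2 : Integrable (fun x => x ^ 2) μ) :
    ∫ x, x ^ 2 + x + 1 ∂μ = ∫ x, x ^ 2 ∂μ + ∫ x, x ∂μ + 1 := by
  have h21 : Integrable (fun x => x ^ 2 + x) μ := h2.add h1
  rw [integral_add h21 (integrable_const 1), integral_add h2 h1]
  simp

lemma integral_mul_add_mul_max_one_le {μ : Measure ℝ} [IsProbabilityMeasure μ]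
    (hμ : μ (Set.Iic 0) = 0) (h1 : Integrable (fun x => x) μ)
    (h2 : Integrable (fun x => x ^ 2) μ) {κ L : ℝ} (hκ : 0 ≤ κ) (hL : 0 ≤ L) :
    ∫ x, κ * (L + x) * max x 1 ∂μ ≤ max L 1 * (κ * (∫ x, x ^ 2 ∂μ + ∫ x, x ∂μ + 1)) := by
  have hpos : ∀ᵐ x ∂μ, 0 ≤ x := by
    rw [ae_iff]
    exact measure_mono_null (fun x (hx : ¬0 ≤ x) => (not_le.mp hx).le) hμ
  calc ∫ x, κ * (L + x) * max x 1 ∂μ ≤ ∫ x, max L 1 * κ * (x ^ 2 + x + 1) ∂μ := by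
        refine integral_mono_of_nonneg ?_ (((h2.add h1).add (integrable_const 1)).const_mul _) ?_
        · filter_upwards [hpos] with x hx
          positivity
        · filter_upwards [hpos] with x hx
          have := mul_le_mul_of_nonneg_left (add_mul_max_one_le_max_one_mul (L := L) hx) hκ
          linarith
    _ = max L 1 * (κ * (∫ x, x ^ 2 ∂μ + ∫ x, x ∂μ + 1)) := by
        rw [integral_const_mul, integral_sq_add_self_add_one h1 h2]
        ring

/-- For the homogeneous one-dimensional loss network with call-arrival rate `κ` and
call-length distribution `π` (supported on `(0,∞)`) with moments `ρ₁, ρ₂`, the size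
function `q(L) = max(L,1)` yields `α_q ≤ κ(ρ₂ + ρ₁ + 1)`; hence `κ(ρ₂ + ρ₁ + 1) < 1`
is a sufficient condition for `α_q < 1`. -/
theorem loss_network_alpha_bound (κ : ℝ) (hκ : 0 ≤ κ)
    (π : Measure ℝ) [IsProbabilityMeasure π] (hsupp : π (Set.Iic 0) = 0)
    (ρ₁ ρ₂ : ℝ) (hρ₁ : ρ₁ = ∫ x, x ∂π) (hρ₂ : ρ₂ = ∫ x, x ^ 2 ∂π)
    (hint1 : Integrable (fun x => x) π) (hint2 : Integrable (fun x => x ^ 2) π) :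
    (∀ L : ℝ, 0 ≤ L →
      (∫ L', κ * (L + L') * max L' 1 ∂π) / max L 1 ≤ κ * (ρ₂ + ρ₁ + 1))
    ∧ (κ * (ρ₂ + ρ₁ + 1) < 1 → ∀ L : ℝ, 0 ≤ L →
      (∫ L', κ * (L + L') * max L' 1 ∂π) / max L 1 < 1) := by
  have bound : ∀ L : ℝ, 0 ≤ L →
      (∫ L', κ * (L + L') * max L' 1 ∂π) / max L 1 ≤ κ * (ρ₂ + ρ₁ + 1) := by
    intro L hL
    rw [div_le_iff₀ (by positivity), mul_comm, hρ₁, hρ₂]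
    exact integral_mul_add_mul_max_one_le hsupp hint1 hint2 hκ hL
  exact ⟨bound, fun hlt L hL => (bound L hL).trans_lt hlt⟩
end

section
/- Let X and Y be random elements of a measurable space with laws μ and μ', defined on a common probability space, and let B be an event with P(B) > 0 such that X = Y on B. Then sup_A |P(Y ∈ A | B) − μ(A)| ≤ P(B^c)/(1 − P(B^c)). -/
open MeasureTheory

/-- Impatient-user-bias bound (Fill's Proposition 6.2): if `X` has law `μ`, `Y` agrees
with `X` on an event `B` with `P(B) > 0`, then the conditional law of `Y` given `B` is
within total-variation distance `P(Bᶜ)/(1 − P(Bᶜ))` of `μ`. -/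
theorem impatient_user_bias {Ω α : Type*} [MeasurableSpace Ω] [MeasurableSpace α]
    (ℙ : Measure Ω) [IsProbabilityMeasure ℙ] (μ : Measure α)
    (X Y : Ω → α) (hX : Measurable X) (hY : Measurable Y)
    (hlaw : Measure.map X ℙ = μ)
    (B : Set Ω) (hB : MeasurableSet B) (hBpos : 0 < ℙ B)
    (hagree : ∀ ω ∈ B, X ω = Y ω) :
    ∀ A : Set α, MeasurableSet A →
      |(ProbabilityTheory.cond ℙ B {ω | Y ω ∈ A}).toReal - (μ A).toReal|
        ≤ (ℙ Bᶜ).toReal / (1 - (ℙ Bᶜ).toReal) := by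
  intro A hA
  have hsets : B ∩ {ω | Y ω ∈ A} = B ∩ (X ⁻¹' A) := by
    ext ω
    constructor
    · rintro ⟨hωB, hωA⟩
      exact ⟨hωB, by simpa [hagree ω hωB] using hωA⟩
    · rintro ⟨hωB, hωA⟩
      exact ⟨hωB, by simpa [← hagree ω hωB] using hωA⟩
  have hμA : μ A = ℙ (X ⁻¹' A) := by
    rw [← hlaw, Measure.map_apply hX hA]
  have hcond : ProbabilityTheory.cond ℙ B {ω | Y ω ∈ A}
      = (ℙ B)⁻¹ * ℙ (B ∩ (X ⁻¹' A)) := by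
    rw [ProbabilityTheory.cond_apply hB, hsets]
  set p : ℝ := (ℙ B).toReal with hp_def
  set c : ℝ := (ℙ Bᶜ).toReal with hc_def
  set a : ℝ := (ℙ (B ∩ (X ⁻¹' A))).toReal with ha_def
  set m : ℝ := (ℙ (X ⁻¹' A)).toReal with hm_def
  have hBne : ℙ B ≠ ⊤ := measure_ne_top _ _
  have hp_pos : 0 < p := ENNReal.toReal_pos hBpos.ne' hBne
  have hcond_real : (ProbabilityTheory.cond ℙ B {ω | Y ω ∈ A}).toReal = a / p := by
    rw [hcond, ENNReal.toReal_mul, ENNReal.toReal_inv]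
    ring
  have hpc : p + c = 1 := by
    rw [hp_def, hc_def, ← ENNReal.toReal_add (measure_ne_top _ _) (measure_ne_top _ _),
      measure_add_measure_compl hB]
    simp
  have hap : a ≤ p := by
    apply ENNReal.toReal_mono hBne
    exact measure_mono Set.inter_subset_left
  have ham : a ≤ m := by
    apply ENNReal.toReal_mono (measure_ne_top _ _)
    exact measure_mono Set.inter_subset_right
  have hmac : m ≤ a + c := by
    rw [hm_def, ha_def, hc_def,
      ← ENNReal.toReal_add (measure_ne_top _ _) (measure_ne_top _ _)]
    apply ENNReal.toReal_mono (by
      exact ENNReal.add_ne_top.mpr ⟨measure_ne_top _ _, measure_ne_top _ _⟩)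
    calc ℙ (X ⁻¹' A) ≤ ℙ ((B ∩ X ⁻¹' A) ∪ Bᶜ) := by
          apply measure_mono
          intro ω hω
          by_cases h : ω ∈ B
          · exact Or.inl ⟨h, hω⟩
          · exact Or.inr h
      _ ≤ ℙ (B ∩ X ⁻¹' A) + ℙ Bᶜ := measure_union_le _ _
  have hp1 : p ≤ 1 := by
    rw [hp_def]
    exact ENNReal.toReal_le_of_le_ofReal one_pos.le (by simpa using prob_le_one)
  have hc1 : 1 - c = p := by linarith
  rw [hcond_real, hμA, ← hm_def, hc1, abs_sub_le_iff]
  have hane : (0:ℝ) ≤ a := ENNReal.toReal_nonneg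
  have hmne : (0:ℝ) ≤ m := ENNReal.toReal_nonneg
  have hcne : (0:ℝ) ≤ c := ENNReal.toReal_nonneg
  constructor
  · have h1 : a - m * p ≤ c := by
      nlinarith [mul_le_mul_of_nonneg_right ham hp_pos.le,
        mul_le_mul_of_nonneg_right (hap.trans hp1) hcne]
    calc a / p - m = (a - m * p) / p := by field_simp
      _ ≤ c / p := by gcongr
  · have h2 : m * p - a ≤ c := by
      nlinarith [mul_nonneg hmne (by linarith : (0:ℝ) ≤ 1 - p)]
    calc m - a / p = (m * p - a) / p := by field_simp
      _ ≤ c / p := by gcongr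
end
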